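/- Let T₁, T₂ be compact operators on a Hilbert space and p > 0. Define 𝔊_p(T) = (limsup_{k→∞} k^{1/p} s_k(T))^p and 𝔤_p(T) = (liminf_{k→∞} k^{1/p} s_k(T))^p. Then |𝔊_p(T₁)^{1/(p+1)} − 𝔊_p(T₂)^{1/(p+1)}| ≤ 𝔊_p(T₁−T₂)^{1/(p+1)} and |𝔤_p(T₁)^{1/(p+1)} − 𝔤_p(T₂)^{1/(p+1)}| ≤ 𝔊_p(T₁−T₂)^{1/(p+1)}. Moreover 𝔤_p(T) ≤ 𝔊_p(T) ≤ ‖T‖_{p,∞}^p. -/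

import Mathlib

/-
Ky Fan's inequality `s_{j+k-1}(T₁) ≤ s_j(T₂) + s_k(T₁ - T₂)`, applied with `j ≈ θn` and
`k ≈ (1 - θ)n`, gives for every splitting ratio `θ ∈ (0, 1)` the asymptotic bound
`X ≤ θ^{-1/p} Y + (1 - θ)^{-1/p} Z` between `X = limsup n^{1/p} s_n(T₁)`,
`Y = limsup j^{1/p} s_j(T₂)` and `Z = limsup k^{1/p} s_k(T₁ - T₂)`; for the liminf, `j` runs
through a sequence realising the liminf of `T₂` and `n ≈ j/θ` is adapted to it. Optimising,
`θ = Y^q / (Y^q + Z^q)` with `q = p/(p+1)` turns the right-hand side into `(Y^q + Z^q)^{1/q}`.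
-/

open scoped ENNReal

noncomputable section

variable {H : Type*} [NormedAddCommGroup H] [InnerProductSpace ℂ H] [CompleteSpace H]

/-- The `k`-th singular value (`k ≥ 1`) as the `k`-th approximation number. -/
def singVal (T : H →L[ℂ] H) (k : ℕ) : ℝ :=
  sInf {r : ℝ | ∃ F : H →L[ℂ] H, ∃ s : Finset H, s.card < k ∧
    LinearMap.range (F : H →ₗ[ℂ] H) ≤ Submodule.span ℂ (s : Set H) ∧ r = ‖T - F‖}

/-- The weak Schatten quasi-norm `‖T‖_{p,∞} = sup_k k^{1/p} s_k(T)`. -/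
def weakSchattenNorm (p : ℝ) (T : H →L[ℂ] H) : ℝ≥0∞ :=
  ⨆ k : ℕ, ENNReal.ofReal (((k + 1 : ℕ) : ℝ) ^ (1 / p) * singVal T (k + 1))

/-- `𝔊_p(T) = (limsup_k k^{1/p} s_k(T))^p`. -/
def bigG (p : ℝ) (T : H →L[ℂ] H) : ℝ≥0∞ :=
  (Filter.limsup (fun k : ℕ => ENNReal.ofReal ((k : ℝ) ^ (1 / p) * singVal T k))
    Filter.atTop) ^ p

/-- `𝔤_p(T) = (liminf_k k^{1/p} s_k(T))^p`. -/
def smallG (p : ℝ) (T : H →L[ℂ] H) : ℝ≥0∞ :=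
  (Filter.liminf (fun k : ℕ => ENNReal.ofReal ((k : ℝ) ^ (1 / p) * singVal T k))
    Filter.atTop) ^ p

open Filter

lemma tendsto_atTop_of_mul_le {f : ℕ → ℕ} {c : ℝ} (hc : 0 < c)
    (h : ∀ᶠ n in atTop, c * n ≤ f n) : Tendsto f atTop atTop :=
  tendsto_natCast_atTop_iff.1 <|
    tendsto_atTop_mono' _ h (tendsto_natCast_atTop_atTop.const_mul_atTop hc)

lemma one_le_and_le_and_one_sub_mul_le {θ : ℝ} (hθ₀ : 0 < θ) (hθ₁ : θ < 1) {n j : ℕ} (hn : 0 < n)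
    (hj : θ * n ≤ j) (hj' : j < θ * n + 1) :
    1 ≤ j ∧ j ≤ n ∧ (1 - θ) * n ≤ ((n + 1 - j : ℕ) : ℝ) := by
  have hn' : (0 : ℝ) < n := Nat.cast_pos.2 hn
  have hjn : j ≤ n := Nat.lt_succ_iff.1 (by exact_mod_cast (by nlinarith : (j : ℝ) < n + 1))
  refine ⟨(Nat.cast_pos (α := ℝ)).1 (by nlinarith), hjn, ?_⟩
  rw [Nat.cast_sub (by omega)]
  push_cast
  linarith

section

variable {ι κ μ : Type*} {f : Filter ι} {g : Filter κ} {l : Filter μ}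
  {u : ι → ℝ≥0∞} {v : κ → ℝ≥0∞} {w : μ → ℝ≥0∞} {a b A B : ℝ≥0∞}

lemma ENNReal.limsup_le_mul_add_mul {J : ι → κ} {K : ι → μ} (hJ : Tendsto J f g)
    (hK : Tendsto K f l) (h : ∀ᶠ n in f, u n ≤ a * v (J n) + b * w (K n))
    (hA : limsup v g < A) (hB : limsup w l < B) :
    limsup u f ≤ a * A + b * B := by
  refine limsup_le_of_le (by isBoundedDefault) ?_
  filter_upwards [h, hJ.eventually (eventually_lt_of_limsup_lt hA),
    hK.eventually (eventually_lt_of_limsup_lt hB)] with n hn hvn hwn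
  exact hn.trans (by gcongr)

lemma ENNReal.liminf_le_mul_add_mul {N : κ → ι} {K : κ → μ} (hN : Tendsto N g f)
    (hK : Tendsto K g l) (h : ∀ᶠ j in g, u (N j) ≤ a * v j + b * w (K j))
    (hA : liminf v g < A) (hB : limsup w l < B) :
    liminf u f ≤ a * A + b * B := by
  refine liminf_le_of_frequently_le ?_ (by isBoundedDefault)
  refine hN.frequently (((frequently_lt_of_liminf_lt (by isBoundedDefault) hA).and_eventually
    (h.and (hK.eventually (eventually_lt_of_limsup_lt hB)))).mono ?_)
  rintro j ⟨hvj, hj, hwj⟩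
  exact hj.trans (by gcongr)

end

lemma ENNReal.le_add_of_forall_lt_ofReal {X Y Z : ℝ≥0∞}
    (h : ∀ u v : ℝ, Y < ENNReal.ofReal u → Z < ENNReal.ofReal v → X ≤ ENNReal.ofReal (u + v)) :
    X ≤ Y + Z := by
  refine ENNReal.le_of_forall_pos_le_add fun ε hε hYZ => ?_
  obtain ⟨hY, hZ⟩ : Y ≠ ⊤ ∧ Z ≠ ⊤ := by simpa [ENNReal.add_eq_top] using hYZ.ne
  have hε₂ : (0 : ℝ) < ε / 2 := by positivity
  calc X ≤ ENNReal.ofReal ((Y.toReal + ε / 2) + (Z.toReal + ε / 2)) :=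
        h _ _ ((ENNReal.lt_ofReal_iff_toReal_lt hY).2 (by linarith))
          ((ENNReal.lt_ofReal_iff_toReal_lt hZ).2 (by linarith))
    _ = Y + Z + ε := by
        rw [show Y.toReal + ε / 2 + (Z.toReal + ε / 2) = Y.toReal + Z.toReal + ε by ring,
          ENNReal.ofReal_add (by positivity) (by positivity),
          ENNReal.ofReal_add (by positivity) (by positivity),
          ENNReal.ofReal_toReal hY, ENNReal.ofReal_toReal hZ, ENNReal.ofReal_coe_nnreal]

/-- `θ = u/(u+v)` minimises `θ^{-1/p} A + (1 - θ)^{-1/p} B` for `A = u^{1/q}`, `B = v^{1/q}`,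
`q = p/(p+1)`, with minimum `(u + v)^{1/q}`. -/
lemma inv_rpow_mul_add_inv_rpow_mul_eq {p u v : ℝ} (hp : 0 < p) (hu : 0 < u) (hv : 0 < v) :
    (u / (u + v))⁻¹ ^ (1 / p) * u ^ (p / (p + 1))⁻¹ +
      (1 - u / (u + v))⁻¹ ^ (1 / p) * v ^ (p / (p + 1))⁻¹ = (u + v) ^ (p / (p + 1))⁻¹ := by
  have huv : 0 < u + v := by positivity
  have hexp : (p / (p + 1))⁻¹ = 1 + 1 / p := by field_simp
  have hterm (x : ℝ) (hx : 0 < x) :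
      ((u + v) / x) ^ (1 / p) * x ^ (1 + 1 / p) = (u + v) ^ (1 / p) * x := by
    rw [Real.div_rpow huv.le hx.le, Real.rpow_add hx, Real.rpow_one]
    field_simp
  rw [hexp, show 1 - u / (u + v) = v / (u + v) by field_simp; ring, inv_div, inv_div,
    hterm u hu, hterm v hv, Real.rpow_add huv, Real.rpow_one]
  ring

theorem ENNReal.rpow_le_add_rpow_of_forall_split {p : ℝ} (hp : 0 < p) {X Y Z : ℝ≥0∞}
    (h : ∀ θ : ℝ, 0 < θ → θ < 1 → ∀ A B : ℝ≥0∞, Y < A → Z < B →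
      X ≤ ENNReal.ofReal (θ⁻¹ ^ (1 / p)) * A + ENNReal.ofReal ((1 - θ)⁻¹ ^ (1 / p)) * B) :
    X ^ (p / (p + 1)) ≤ Y ^ (p / (p + 1)) + Z ^ (p / (p + 1)) := by
  set q := p / (p + 1)
  have hq : 0 < q := by positivity
  refine ENNReal.le_add_of_forall_lt_ofReal fun u v hu hv => ?_
  have hu₀ : 0 < u := ENNReal.ofReal_pos.1 (pos_of_gt hu)
  have hv₀ : 0 < v := ENNReal.ofReal_pos.1 (pos_of_gt hv)
  have hY : Y < ENNReal.ofReal (u ^ q⁻¹) := by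
    rwa [← ENNReal.ofReal_rpow_of_pos hu₀, ENNReal.lt_rpow_inv_iff hq]
  have hZ : Z < ENNReal.ofReal (v ^ q⁻¹) := by
    rwa [← ENNReal.ofReal_rpow_of_pos hv₀, ENNReal.lt_rpow_inv_iff hq]
  have hθ₁ : u / (u + v) < 1 := (div_lt_one (by positivity)).2 (by linarith)
  have hX := h (u / (u + v)) (by positivity) hθ₁ _ _ hY hZ
  rw [← ENNReal.ofReal_mul (by positivity),
    ← ENNReal.ofReal_mul (Real.rpow_nonneg (inv_nonneg.2 (sub_pos.2 hθ₁).le) _),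
    ← ENNReal.ofReal_add (by positivity) (by positivity),
    inv_rpow_mul_add_inv_rpow_mul_eq hp hu₀ hv₀] at hX
  calc X ^ q ≤ ENNReal.ofReal ((u + v) ^ q⁻¹) ^ q := ENNReal.rpow_le_rpow hX hq.le
    _ = ENNReal.ofReal (u + v) := by
        rw [ENNReal.ofReal_rpow_of_nonneg (by positivity) hq.le, ← Real.rpow_mul (by positivity),
          inv_mul_cancel₀ hq.ne', Real.rpow_one]

section

variable {H : Type*} [NormedAddCommGroup H] [InnerProductSpace ℂ H]

lemma singVal_le_norm_sub {T F : H →L[ℂ] H} {s : Finset H} {k : ℕ} (hs : s.card < k)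
    (hF : LinearMap.range (F : H →ₗ[ℂ] H) ≤ Submodule.span ℂ (s : Set H)) :
    singVal T k ≤ ‖T - F‖ :=
  csInf_le ⟨0, by rintro r ⟨F, s, -, -, rfl⟩; positivity⟩ ⟨F, s, hs, hF, rfl⟩

lemma le_singVal {T : H →L[ℂ] H} {k : ℕ} (hk : 1 ≤ k) {c : ℝ}
    (h : ∀ (F : H →L[ℂ] H) (s : Finset H), s.card < k →
      LinearMap.range (F : H →ₗ[ℂ] H) ≤ Submodule.span ℂ (s : Set H) → c ≤ ‖T - F‖) :
    c ≤ singVal T k :=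
  le_csInf ⟨‖T - 0‖, 0, ∅, by rw [Finset.card_empty]; exact hk, by simp, rfl⟩
    (by rintro r ⟨F, s, hs, hF, rfl⟩; exact h F s hs hF)

lemma singVal_nonneg (T : H →L[ℂ] H) (k : ℕ) : 0 ≤ singVal T k :=
  Real.sInf_nonneg (by rintro r ⟨F, s, -, -, rfl⟩; positivity)

lemma singVal_neg (T : H →L[ℂ] H) (k : ℕ) : singVal (-T) k = singVal T k := by
  refine congrArg sInf (Set.ext fun r => ⟨?_, ?_⟩) <;> rintro ⟨F, s, hs, hF, rfl⟩ <;>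
    refine ⟨-F, s, hs, by simpa [LinearMap.range_neg] using hF, ?_⟩ <;>
    rw [← norm_neg] <;> congr 1 <;> abel

theorem singVal_add_sub_one_le (T₁ T₂ : H →L[ℂ] H) {j k : ℕ} (hj : 1 ≤ j) (hk : 1 ≤ k) :
    singVal T₁ (j + k - 1) ≤ singVal T₂ j + singVal (T₁ - T₂) k := by
  classical
  rw [← sub_le_iff_le_add]
  refine le_singVal hj fun F₂ s₂ hs₂ hF₂ => ?_
  rw [sub_le_iff_le_add, ← sub_le_iff_le_add']
  refine le_singVal hk fun F s hs hF => ?_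
  rw [sub_le_iff_le_add']
  have hrange : LinearMap.range ((F₂ + F : H →L[ℂ] H) : H →ₗ[ℂ] H) ≤
      Submodule.span ℂ ((s₂ ∪ s : Finset H) : Set H) := by
    rw [ContinuousLinearMap.toLinearMap_add, Finset.coe_union, Submodule.span_union]
    exact (LinearMap.range_add_le _ _).trans (sup_le_sup hF₂ hF)
  calc singVal T₁ (j + k - 1) ≤ ‖T₁ - (F₂ + F)‖ :=
        singVal_le_norm_sub ((Finset.card_union_le _ _).trans_lt (by omega)) hrange
    _ = ‖(T₂ - F₂) + (T₁ - T₂ - F)‖ := by congr 1; abel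
    _ ≤ ‖T₂ - F₂‖ + ‖T₁ - T₂ - F‖ := norm_add_le _ _

/-- The sequence whose limsup and liminf define `𝔊_p` and `𝔤_p` when `r = 1/p`. -/
def scaledSingVal (r : ℝ) (T : H →L[ℂ] H) (k : ℕ) : ℝ≥0∞ :=
  ENNReal.ofReal ((k : ℝ) ^ r * singVal T k)

lemma scaledSingVal_le_of_split (T₁ T₂ : H →L[ℂ] H) {r θ : ℝ} (hr : 0 ≤ r) (hθ₀ : 0 < θ)
    (hθ₁ : θ < 1) {n j : ℕ} (hn : 0 < n) (hj : θ * n ≤ j) (hj' : j < θ * n + 1) :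
    scaledSingVal r T₁ n ≤ ENNReal.ofReal (θ⁻¹ ^ r) * scaledSingVal r T₂ j +
      ENNReal.ofReal ((1 - θ)⁻¹ ^ r) * scaledSingVal r (T₁ - T₂) (n + 1 - j) := by
  obtain ⟨hj1, hjn, hk⟩ := one_le_and_le_and_one_sub_mul_le hθ₀ hθ₁ hn hj hj'
  set k := n + 1 - j
  have h1θ : 0 < 1 - θ := sub_pos.2 hθ₁
  have hnj : (n : ℝ) ^ r ≤ θ⁻¹ ^ r * (j : ℝ) ^ r := by
    rw [← Real.mul_rpow (by positivity) (by positivity)]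
    gcongr
    rwa [le_inv_mul_iff₀ hθ₀]
  have hnk : (n : ℝ) ^ r ≤ (1 - θ)⁻¹ ^ r * (k : ℝ) ^ r := by
    rw [← Real.mul_rpow (by positivity) (by positivity)]
    gcongr
    rwa [le_inv_mul_iff₀ h1θ]
  have hkyFan : singVal T₁ n ≤ singVal T₂ j + singVal (T₁ - T₂) k := by
    simpa [k, show j + (n + 1 - j) - 1 = n by omega] using
      singVal_add_sub_one_le T₁ T₂ hj1 (k := k) (by omega)
  have hsj := singVal_nonneg T₂ j
  have hsk := singVal_nonneg (T₁ - T₂) k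
  have hreal : (n : ℝ) ^ r * singVal T₁ n ≤
      θ⁻¹ ^ r * ((j : ℝ) ^ r * singVal T₂ j) +
        (1 - θ)⁻¹ ^ r * ((k : ℝ) ^ r * singVal (T₁ - T₂) k) :=
    calc (n : ℝ) ^ r * singVal T₁ n
        ≤ (n : ℝ) ^ r * singVal T₂ j + (n : ℝ) ^ r * singVal (T₁ - T₂) k := by
          rw [← mul_add]; gcongr
      _ ≤ θ⁻¹ ^ r * (j : ℝ) ^ r * singVal T₂ j +
          (1 - θ)⁻¹ ^ r * (k : ℝ) ^ r * singVal (T₁ - T₂) k := by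
          gcongr
      _ = _ := by ring
  unfold scaledSingVal
  rw [← ENNReal.ofReal_mul (by positivity), ← ENNReal.ofReal_mul (by positivity),
    ← ENNReal.ofReal_add (by positivity) (by positivity)]
  exact ENNReal.ofReal_le_ofReal hreal

lemma limsup_scaledSingVal_le (T₁ T₂ : H →L[ℂ] H) {r θ : ℝ} (hr : 0 ≤ r) (hθ₀ : 0 < θ)
    (hθ₁ : θ < 1) {A B : ℝ≥0∞} (hA : limsup (scaledSingVal r T₂) atTop < A)
    (hB : limsup (scaledSingVal r (T₁ - T₂)) atTop < B) :
    limsup (scaledSingVal r T₁) atTop ≤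
      ENNReal.ofReal (θ⁻¹ ^ r) * A + ENNReal.ofReal ((1 - θ)⁻¹ ^ r) * B := by
  have hJ (n : ℕ) : θ * n ≤ ⌈θ * n⌉₊ ∧ (⌈θ * n⌉₊ : ℝ) < θ * n + 1 :=
    ⟨Nat.le_ceil _, Nat.ceil_lt_add_one (by positivity)⟩
  have hK : ∀ᶠ n : ℕ in atTop, (1 - θ) * n ≤ ((n + 1 - ⌈θ * n⌉₊ : ℕ) : ℝ) :=
    (eventually_gt_atTop 0).mono fun n hn =>
      (one_le_and_le_and_one_sub_mul_le hθ₀ hθ₁ hn (hJ n).1 (hJ n).2).2.2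
  refine ENNReal.limsup_le_mul_add_mul
    (tendsto_atTop_of_mul_le hθ₀ (Eventually.of_forall fun n => (hJ n).1))
    (tendsto_atTop_of_mul_le (sub_pos.2 hθ₁) hK) ?_ hA hB
  exact (eventually_gt_atTop 0).mono fun n hn =>
    scaledSingVal_le_of_split T₁ T₂ hr hθ₀ hθ₁ hn (hJ n).1 (hJ n).2

lemma liminf_scaledSingVal_le (T₁ T₂ : H →L[ℂ] H) {r θ : ℝ} (hr : 0 ≤ r) (hθ₀ : 0 < θ)
    (hθ₁ : θ < 1) {A B : ℝ≥0∞} (hA : liminf (scaledSingVal r T₂) atTop < A)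
    (hB : limsup (scaledSingVal r (T₁ - T₂)) atTop < B) :
    liminf (scaledSingVal r T₁) atTop ≤
      ENNReal.ofReal (θ⁻¹ ^ r) * A + ENNReal.ofReal ((1 - θ)⁻¹ ^ r) * B := by
  set N : ℕ → ℕ := fun j => ⌊j / θ⌋₊
  have hN (j : ℕ) : θ * N j ≤ j ∧ (j : ℝ) < θ * N j + 1 := by
    have h1 : (N j : ℝ) ≤ j / θ := Nat.floor_le (by positivity)
    have h2 : (j : ℝ) / θ < N j + 1 := Nat.lt_floor_add_one _
    constructor
    · rwa [le_div_iff₀ hθ₀, mul_comm] at h1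
    · rw [div_lt_iff₀ hθ₀] at h2
      nlinarith
  have hjN (j : ℕ) : j ≤ N j :=
    Nat.le_floor ((le_div_iff₀ hθ₀).2 (mul_le_of_le_one_right (by positivity) hθ₁.le))
  have hNpos : ∀ᶠ j : ℕ in atTop, 0 < N j :=
    (eventually_gt_atTop 0).mono fun j hj => hj.trans_le (hjN j)
  have hK : ∀ᶠ j : ℕ in atTop, (1 - θ) * j ≤ ((N j + 1 - j : ℕ) : ℝ) :=
    hNpos.mono fun j hj =>
      calc (1 - θ) * j ≤ (1 - θ) * N j := by gcongr; exact hjN j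
        _ ≤ _ := (one_le_and_le_and_one_sub_mul_le hθ₀ hθ₁ hj (hN j).1 (hN j).2).2.2
  refine ENNReal.liminf_le_mul_add_mul
    (tendsto_atTop_of_mul_le one_pos (Eventually.of_forall fun j => by simpa using hjN j))
    (tendsto_atTop_of_mul_le (sub_pos.2 hθ₁) hK) ?_ hA hB
  exact hNpos.mono fun j hj => scaledSingVal_le_of_split T₁ T₂ hr hθ₀ hθ₁ hj (hN j).1 (hN j).2

lemma bigG_rpow_le {p : ℝ} (hp : 0 < p) (T₁ T₂ : H →L[ℂ] H) :
    bigG p T₁ ^ (1 / (p + 1)) ≤ bigG p T₂ ^ (1 / (p + 1)) + bigG p (T₁ - T₂) ^ (1 / (p + 1)) := by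
  simp only [bigG, ← ENNReal.rpow_mul, mul_one_div]
  exact ENNReal.rpow_le_add_rpow_of_forall_split hp fun θ hθ₀ hθ₁ A B hA hB =>
    limsup_scaledSingVal_le T₁ T₂ (by positivity) hθ₀ hθ₁ hA hB

lemma smallG_rpow_le {p : ℝ} (hp : 0 < p) (T₁ T₂ : H →L[ℂ] H) :
    smallG p T₁ ^ (1 / (p + 1)) ≤
      smallG p T₂ ^ (1 / (p + 1)) + bigG p (T₁ - T₂) ^ (1 / (p + 1)) := by
  simp only [smallG, bigG, ← ENNReal.rpow_mul, mul_one_div]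
  exact ENNReal.rpow_le_add_rpow_of_forall_split hp fun θ hθ₀ hθ₁ A B hA hB =>
    liminf_scaledSingVal_le T₁ T₂ (by positivity) hθ₀ hθ₁ hA hB

lemma bigG_sub_comm (p : ℝ) (T₁ T₂ : H →L[ℂ] H) : bigG p (T₂ - T₁) = bigG p (T₁ - T₂) := by
  simp only [bigG, ← neg_sub T₁ T₂, singVal_neg]

lemma smallG_le_bigG {p : ℝ} (hp : 0 ≤ p) (T : H →L[ℂ] H) : smallG p T ≤ bigG p T :=
  ENNReal.rpow_le_rpow liminf_le_limsup hp

lemma bigG_le_weakSchattenNorm_rpow {p : ℝ} (hp : 0 ≤ p) (T : H →L[ℂ] H) :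
    bigG p T ≤ weakSchattenNorm p T ^ p :=
  ENNReal.rpow_le_rpow (by rw [← limsup_nat_add _ 1]; exact limsup_le_iSup) hp

end

theorem stmt_12_general (p : ℝ) (hp : 0 < p) (T₁ T₂ : H →L[ℂ] H) :
    (bigG p T₁ ^ (1 / (p + 1)) ≤ bigG p T₂ ^ (1 / (p + 1)) +
        bigG p (T₁ - T₂) ^ (1 / (p + 1))) ∧
    (bigG p T₂ ^ (1 / (p + 1)) ≤ bigG p T₁ ^ (1 / (p + 1)) +
        bigG p (T₁ - T₂) ^ (1 / (p + 1))) ∧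
    (smallG p T₁ ^ (1 / (p + 1)) ≤ smallG p T₂ ^ (1 / (p + 1)) +
        bigG p (T₁ - T₂) ^ (1 / (p + 1))) ∧
    (smallG p T₂ ^ (1 / (p + 1)) ≤ smallG p T₁ ^ (1 / (p + 1)) +
        bigG p (T₁ - T₂) ^ (1 / (p + 1))) ∧
    (∀ T : H →L[ℂ] H, smallG p T ≤ bigG p T ∧
      bigG p T ≤ (weakSchattenNorm (p := p) T) ^ p) :=
  ⟨bigG_rpow_le hp T₁ T₂, bigG_sub_comm p T₁ T₂ ▸ bigG_rpow_le hp T₂ T₁,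
    smallG_rpow_le hp T₁ T₂, bigG_sub_comm p T₁ T₂ ▸ smallG_rpow_le hp T₂ T₁,
    fun T => ⟨smallG_le_bigG hp.le T, bigG_le_weakSchattenNorm_rpow hp.le T⟩⟩

/-- `|𝔊_p(T₁)^{1/(p+1)} - 𝔊_p(T₂)^{1/(p+1)}| ≤ 𝔊_p(T₁-T₂)^{1/(p+1)}`
(and likewise for `𝔤_p`), together with `𝔤_p(T) ≤ 𝔊_p(T) ≤ ‖T‖_{p,∞}^p`. The absolute
value of the difference is expressed by the two one-sided inequalities. -/
theorem stmt_12 (p : ℝ) (hp : 0 < p) (T₁ T₂ : H →L[ℂ] H)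
    (hT₁ : IsCompactOperator T₁) (hT₂ : IsCompactOperator T₂) :
    (bigG p T₁ ^ (1 / (p + 1)) ≤ bigG p T₂ ^ (1 / (p + 1)) +
        bigG p (T₁ - T₂) ^ (1 / (p + 1))) ∧
    (bigG p T₂ ^ (1 / (p + 1)) ≤ bigG p T₁ ^ (1 / (p + 1)) +
        bigG p (T₁ - T₂) ^ (1 / (p + 1))) ∧
    (smallG p T₁ ^ (1 / (p + 1)) ≤ smallG p T₂ ^ (1 / (p + 1)) +
        bigG p (T₁ - T₂) ^ (1 / (p + 1))) ∧
    (smallG p T₂ ^ (1 / (p + 1)) ≤ smallG p T₁ ^ (1 / (p + 1)) +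
        bigG p (T₁ - T₂) ^ (1 / (p + 1))) ∧
    (∀ T : H →L[ℂ] H, smallG p T ≤ bigG p T ∧
      bigG p T ≤ (weakSchattenNorm (p := p) T) ^ p) :=
  stmt_12_general p hp T₁ T₂
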